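/- The probability measure η_γ with S-transform S_{η_γ}(z) = exp(−γz) has mean 1 and its CSK family has pseudo-variance function V_{η_γ}(m) = γ m² / ln(m) and variance function V_{η_γ}(m) = γ m(m−1)/ln(m) on its domain of means contained in (0,1). -/

import Mathlib

open MeasureTheory Set Filter Topology ENNReal

noncomputable section

/-- Cauchy-Stieltjes moment-type transform `M_ν(θ) = ∫ 1/(1-θx) dν(x)`. -/
def Mcs (ν : Measure ℝ) (θ : ℝ) : ℝ := ∫ x, 1 / (1 - θ * x) ∂ν

/-- The mean map `k_ν(θ) = (M_ν(θ) - 1)/(θ M_ν(θ))`. -/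
def kcs (ν : Measure ℝ) (θ : ℝ) : ℝ := (Mcs ν θ - 1) / (θ * Mcs ν θ)

/-- The Cauchy transform `G_ν(z) = ∫ 1/(z-x) dν(x)`. -/
def Gcs (ν : Measure ℝ) (z : ℝ) : ℝ := ∫ x, 1 / (z - x) ∂ν

/-- `Ψ_ν(z) = ∫ zx/(1-zx) dν(x)`. -/
def PsiT (ν : Measure ℝ) (z : ℝ) : ℝ := ∫ x, z * x / (1 - z * x) ∂ν

/-- Topological support of a measure on ℝ. -/
def msupp (ν : Measure ℝ) : Set ℝ := {x | ∀ U ∈ 𝓝 x, ν U ≠ 0}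

/-- The natural parameter domain `(θ₋, θ₊) \ {0}`: nonzero `θ` with `θ x < 1` on the support. -/
def ΘDom (ν : Measure ℝ) : Set ℝ := {θ | θ ≠ 0 ∧ ∀ x ∈ msupp ν, θ * x < 1}

/-- Right-sided parameter domain `(0, θ₊)`. -/
def ΘPlus (ν : Measure ℝ) : Set ℝ := {θ | 0 < θ ∧ ∀ x ∈ msupp ν, θ * x < 1}

/-- `ψ_ν`, the inverse of the mean map `k_ν` on the parameter domain. -/
def ψcs (ν : Measure ℝ) : ℝ → ℝ := Function.invFunOn (kcs ν) (ΘDom ν)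

/-- `ψ_ν` for the right-sided family. -/
def ψplus (ν : Measure ℝ) : ℝ → ℝ := Function.invFunOn (kcs ν) (ΘPlus ν)

/-- `ψ_ν` for the left-sided family (measures on `[0,∞)`, parameter `θ < 0`). -/
def ψminus (ν : Measure ℝ) : ℝ → ℝ := Function.invFunOn (kcs ν) (Iio 0)

/-- The pseudo-variance function `𝕍_ν(m) = m (1/ψ_ν(m) - m)`. -/
def pseudoVar (ν : Measure ℝ) (m : ℝ) : ℝ := m * (1 / ψcs ν m - m)

def pseudoVarMinus (ν : Measure ℝ) (m : ℝ) : ℝ := m * (1 / ψminus ν m - m)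

/-- The tilted measure `P_{θ,ν}(dx) = ν(dx)/(M_ν(θ)(1-θx))`. -/
def tilt (ν : Measure ℝ) (θ : ℝ) : Measure ℝ :=
  ν.withDensity (fun x => ENNReal.ofReal (1 / (Mcs ν θ * (1 - θ * x))))

/-- `Q_{m,ν}`, the element of the CSK family with mean `m`. -/
def Qcsk (ν : Measure ℝ) (m : ℝ) : Measure ℝ := tilt ν (ψcs ν m)

def QcskMinus (ν : Measure ℝ) (m : ℝ) : Measure ℝ := tilt ν (ψminus ν m)

/-- The variance function `V_ν(m) = ∫ (x-m)² dQ_{m,ν}(x)`. -/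
def varFun (ν : Measure ℝ) (m : ℝ) : ℝ := ∫ x, (x - m) ^ 2 ∂(Qcsk ν m)

def varFunMinus (ν : Measure ℝ) (m : ℝ) : ℝ := ∫ x, (x - m) ^ 2 ∂(QcskMinus ν m)

/-- Domain of means (two-sided). -/
def meanDom (ν : Measure ℝ) : Set ℝ := kcs ν '' ΘDom ν

/-- Right-sided domain of means `(m₀(ν), m₊(ν))`. -/
def meanDomPlus (ν : Measure ℝ) : Set ℝ := kcs ν '' ΘPlus ν

/-- Left-sided domain of means `(m₋(ν), m₀(ν))`. -/
def meanDomMinus (ν : Measure ℝ) : Set ℝ := kcs ν '' Iio 0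

/-- `χ_ν`, the inverse of `Ψ_ν` on negative reals. -/
def χT (ν : Measure ℝ) : ℝ → ℝ := Function.invFunOn (PsiT ν) (Iio 0)

/-- The S-transform `S_ν(z) = χ_ν(z)(1+z)/z`. -/
def Stransf (ν : Measure ℝ) (z : ℝ) : ℝ := χT ν z * (1 + z) / z

/-- `m₋(ν) = -1/G_ν(0)` for a measure on `[0,∞)`. -/
def mMinus (ν : Measure ℝ) : ℝ := -(Gcs ν 0)⁻¹

/-- The self-energy (K-transform) `K_ν(z) = z - 1/G_ν(z)`. -/
def KT (ν : Measure ℝ) (z : ℝ) : ℝ := z - 1 / Gcs ν z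

/-- A measure is non-degenerate if it is not a Dirac mass. -/
def Nondeg (ν : Measure ℝ) : Prop := ∀ c : ℝ, ν ≠ Measure.dirac c
def pseudoVarPlus (ν : Measure ℝ) (m : ℝ) : ℝ := m * (1 / ψplus ν m - m)

def QcskPlus (ν : Measure ℝ) (m : ℝ) : Measure ℝ := tilt ν (ψplus ν m)

def varFunPlus (ν : Measure ℝ) (m : ℝ) : ℝ := ∫ x, (x - m) ^ 2 ∂(QcskPlus ν m)

/-- The mean of a measure on `[0,∞)`, as an extended nonnegative real. -/
def m0E (ν : Measure ℝ) : ℝ≥0∞ := ∫⁻ x, ENNReal.ofReal x ∂ν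

/-- The Σ-transform `Σ_ν(z) = S_ν(z/(1-z))`. -/
def SigmaT (ν : Measure ℝ) (z : ℝ) : ℝ := Stransf ν (z / (1 - z))

/-- The free Poisson (Marchenko–Pastur) law with density `(1/2π)√((4-x)/x)` on `(0,4)`. -/
def freePoisson : Measure ℝ :=
  volume.withDensity (fun x => ENNReal.ofReal
    (Set.indicator (Ioo 0 4) (fun y => (1/(2*Real.pi)) * Real.sqrt ((4 - y)/y)) x))

/-!
For `θ < 0` put `z = Ψ(θ) = M(θ) - 1 ∈ (η{0} - 1, 0)`. Since `χ(z) = θ`, the S-transform at `z`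
is `θ M(θ) / (M(θ) - 1) = 1 / k(θ)`, so the hypothesis reads `k(θ) = exp (γ z)`, i.e.
`log m = γ z` for `m = k(θ)`; the pseudo-variance `m (1/θ - m)` simplifies to `m² / z`.
Monotone convergence in `∫ x / (1 - θx) dη = M(θ) k(θ)` identifies the mean with
`lim_{θ → 0⁻} k(θ) = 1`, and a partial-fraction decomposition of `(x - m)² / (1 - θx)` gives
`V(m) = ((m - 1)/m) 𝕍(m)`.
-/

lemma one_le_one_sub_mul {θ x : ℝ} (hθ : θ ≤ 0) (hx : 0 ≤ x) : 1 ≤ 1 - θ * x := by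
  nlinarith

lemma one_div_one_sub_mul_mem_Ioc {θ x : ℝ} (hθ : θ ≤ 0) (hx : 0 ≤ x) :
    1 / (1 - θ * x) ∈ Ioc 0 1 := by
  have h := one_le_one_sub_mul hθ hx
  exact ⟨by positivity, (div_le_one (by linarith)).2 h⟩

section Nonneg

variable {η : Measure ℝ}

lemma ae_nonneg_of_measure_Iio (hpos : η (Iio 0) = 0) : ∀ᵐ x ∂η, 0 ≤ x := by
  simpa using measure_eq_zero_iff_ae_notMem.1 hpos

lemma integrable_one_div_one_sub_mul [IsFiniteMeasure η] (hpos : η (Iio 0) = 0) {θ : ℝ}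
    (hθ : θ ≤ 0) : Integrable (fun x => 1 / (1 - θ * x)) η := by
  refine Integrable.of_bound (Measurable.aestronglyMeasurable (by fun_prop)) 1 ?_
  filter_upwards [ae_nonneg_of_measure_Iio hpos] with x hx
  have h := one_div_one_sub_mul_mem_Ioc hθ hx
  rw [Real.norm_eq_abs, abs_of_pos h.1]
  exact h.2

lemma div_one_sub_mul_ae_eq (hpos : η (Iio 0) = 0) {θ : ℝ} (hθ : θ < 0) :
    (fun x => x / (1 - θ * x)) =ᵐ[η] fun x => (1 / (1 - θ * x) - 1) / θ := by
  filter_upwards [ae_nonneg_of_measure_Iio hpos] with x hx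
  have : 1 - x * θ ≠ 0 := by linarith [one_le_one_sub_mul hθ.le hx]
  have : θ ≠ 0 := hθ.ne
  field_simp
  ring

lemma measure_Ioi_pos [IsProbabilityMeasure η] (hpos : η (Iio 0) = 0) (hatom : η {0} < 1) :
    0 < η (Ioi 0) := by
  have hIic : η (Iic 0) < 1 := by
    calc η (Iic 0) = η ({0} ∪ Iio 0) := by rw [singleton_union, Iio_insert]
      _ ≤ η {0} + η (Iio 0) := measure_union_le _ _
      _ < 1 := by rwa [hpos, add_zero]
  rw [← compl_Iic, prob_compl_eq_one_sub measurableSet_Iic]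
  exact tsub_pos_of_lt hIic

lemma integral_pos_of_pos_on_Ioi [IsProbabilityMeasure η] (hpos : η (Iio 0) = 0)
    (hatom : η {0} < 1) {f : ℝ → ℝ} (hf : Integrable f η) (hf_nonneg : ∀ x, 0 ≤ x → 0 ≤ f x)
    (hf_pos : ∀ x, 0 < x → 0 < f x) : 0 < ∫ x, f x ∂η := by
  have hnn : 0 ≤ᵐ[η] f := by
    filter_upwards [ae_nonneg_of_measure_Iio hpos] with x hx using hf_nonneg x hx
  rw [integral_pos_iff_support_of_nonneg_ae hnn hf]
  exact (measure_Ioi_pos hpos hatom).trans_le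
    (measure_mono fun x hx => (hf_pos x hx).ne')

end Nonneg

section Transforms

variable {η : Measure ℝ} [IsProbabilityMeasure η]

lemma Mcs_zero : Mcs η 0 = 1 := by
  simp [Mcs]

lemma Mcs_strictMonoOn (hpos : η (Iio 0) = 0) (hatom : η {0} < 1) :
    StrictMonoOn (Mcs η) (Iic 0) := by
  intro θ₁ hθ₁ θ₂ hθ₂ h12
  have hI₁ := integrable_one_div_one_sub_mul hpos hθ₁
  have hI₂ := integrable_one_div_one_sub_mul hpos hθ₂
  have h := integral_pos_of_pos_on_Ioi (f := fun x => 1 / (1 - θ₂ * x) - 1 / (1 - θ₁ * x))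
    hpos hatom (hI₂.sub hI₁)
    (fun x hx => sub_nonneg.2 <| one_div_le_one_div_of_le
      (by linarith [one_le_one_sub_mul hθ₂ hx]) (by nlinarith))
    (fun x hx => sub_pos.2 <| one_div_lt_one_div_of_lt
      (by linarith [one_le_one_sub_mul hθ₂ hx.le]) (by nlinarith))
  rw [integral_sub hI₂ hI₁] at h
  exact sub_pos.1 h

lemma Mcs_lt_one (hpos : η (Iio 0) = 0) (hatom : η {0} < 1) {θ : ℝ} (hθ : θ < 0) :
    Mcs η θ < 1 :=
  Mcs_zero (η := η) ▸ Mcs_strictMonoOn hpos hatom hθ.le (mem_Iic.2 le_rfl) hθ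

lemma toReal_measure_zero_lt_Mcs (hpos : η (Iio 0) = 0) (hatom : η {0} < 1) {θ : ℝ}
    (hθ : θ ≤ 0) : (η {0}).toReal < Mcs η θ := by
  have hI := integrable_one_div_one_sub_mul hpos hθ
  have hind : Integrable (({0} : Set ℝ).indicator fun _ => (1 : ℝ)) η :=
    (integrable_const 1).indicator (measurableSet_singleton 0)
  have hoff {x : ℝ} (hx : 0 < x) : ({0} : Set ℝ).indicator (fun _ => (1 : ℝ)) x = 0 :=
    indicator_of_notMem (by simpa using hx.ne') _
  have h := integral_pos_of_pos_on_Ioi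
    (f := fun x => 1 / (1 - θ * x) - ({0} : Set ℝ).indicator (fun _ => (1 : ℝ)) x)
    hpos hatom (hI.sub hind)
    (fun x hx => by
      rcases hx.eq_or_lt with rfl | hx
      · simp
      · simpa [hoff hx] using (one_div_one_sub_mul_mem_Ioc hθ hx.le).1.le)
    (fun x hx => by simpa [hoff hx] using (one_div_one_sub_mul_mem_Ioc hθ hx.le).1)
  rw [integral_sub hI hind, integral_indicator_const _ (measurableSet_singleton 0)] at h
  simpa [measureReal_def, Mcs] using h

lemma Mcs_pos (hpos : η (Iio 0) = 0) (hatom : η {0} < 1) {θ : ℝ} (hθ : θ ≤ 0) :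
    0 < Mcs η θ :=
  ENNReal.toReal_nonneg.trans_lt (toReal_measure_zero_lt_Mcs hpos hatom hθ)

lemma PsiT_eq_Mcs_sub_one (hpos : η (Iio 0) = 0) {θ : ℝ} (hθ : θ ≤ 0) :
    PsiT η θ = Mcs η θ - 1 := by
  have hI := integrable_one_div_one_sub_mul hpos hθ
  calc PsiT η θ = ∫ x, (1 / (1 - θ * x) - 1) ∂η := by
        refine integral_congr_ae ?_
        filter_upwards [ae_nonneg_of_measure_Iio hpos] with x hx
        have := one_le_one_sub_mul hθ hx
        field_simp
        ring
    _ = Mcs η θ - 1 := by rw [integral_sub hI (integrable_const 1)]; simp [Mcs]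

lemma PsiT_mem_Ioo (hpos : η (Iio 0) = 0) (hatom : η {0} < 1) {θ : ℝ} (hθ : θ < 0) :
    PsiT η θ ∈ Ioo ((η {0}).toReal - 1) 0 := by
  rw [PsiT_eq_Mcs_sub_one hpos hθ.le]
  exact ⟨by linarith [toReal_measure_zero_lt_Mcs hpos hatom hθ.le],
    by linarith [Mcs_lt_one hpos hatom hθ]⟩

lemma χT_PsiT (hpos : η (Iio 0) = 0) (hatom : η {0} < 1) {θ : ℝ} (hθ : θ < 0) :
    χT η (PsiT η θ) = θ := by
  have hmono : StrictMonoOn (PsiT η) (Iio 0) := fun a ha b hb hab => by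
    have ha' : a ≤ 0 := le_of_lt ha
    have hb' : b ≤ 0 := le_of_lt hb
    rw [PsiT_eq_Mcs_sub_one hpos ha', PsiT_eq_Mcs_sub_one hpos hb']
    exact sub_lt_sub_right (Mcs_strictMonoOn hpos hatom ha' hb' hab) 1
  exact hmono.injOn.leftInvOn_invFunOn hθ

lemma kcs_eq_inv_Stransf_PsiT (hpos : η (Iio 0) = 0) (hatom : η {0} < 1) {θ : ℝ}
    (hθ : θ < 0) : kcs η θ = (Stransf η (PsiT η θ))⁻¹ := by
  rw [Stransf, χT_PsiT hpos hatom hθ, PsiT_eq_Mcs_sub_one hpos hθ.le, inv_div, kcs]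
  ring_nf

end Transforms

section CSKFamily

variable {η : Measure ℝ} {θ : ℝ}

lemma pseudoVarMinus_kcs (hψ : ψminus η (kcs η θ) = θ) :
    pseudoVarMinus η (kcs η θ) = kcs η θ ^ 2 / (Mcs η θ - 1) := by
  rw [pseudoVarMinus, hψ, kcs]
  rcases eq_or_ne θ 0 with rfl | hθ
  · simp
  rcases eq_or_ne (Mcs η θ) 0 with hM | hM
  · simp [hM]
  rcases eq_or_ne (Mcs η θ - 1) 0 with hM1 | hM1
  · simp [hM1]
  field_simp
  ring

lemma integral_tilt (hpos : η (Iio 0) = 0) (hθ : θ ≤ 0) (g : ℝ → ℝ) :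
    ∫ x, g x ∂(tilt η θ) = ∫ x, g x / (Mcs η θ * (1 - θ * x)) ∂η := by
  have hM : 0 ≤ Mcs η θ := integral_nonneg_of_ae <| by
    filter_upwards [ae_nonneg_of_measure_Iio hpos] with x hx
    exact (one_div_one_sub_mul_mem_Ioc hθ hx).1.le
  rw [tilt, integral_withDensity_eq_integral_toReal_smul (by fun_prop)
    (ae_of_all _ fun _ => ofReal_lt_top)]
  refine integral_congr_ae ?_
  filter_upwards [ae_nonneg_of_measure_Iio hpos] with x hx
  have := one_le_one_sub_mul hθ hx
  rw [ENNReal.toReal_ofReal (by positivity), smul_eq_mul]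
  ring

variable [IsProbabilityMeasure η]

lemma varFunMinus_kcs (hpos : η (Iio 0) = 0) (hatom : η {0} < 1)
    (hint : Integrable (fun x => x) η) (hθ : θ < 0) (hψ : ψminus η (kcs η θ) = θ) :
    varFunMinus η (kcs η θ)
      = (kcs η θ - ∫ x, x ∂η) / kcs η θ * pseudoVarMinus η (kcs η θ) := by
  set M := Mcs η θ with hM_def
  set m := kcs η θ with hm_def
  have hθ0 : θ ≠ 0 := hθ.ne
  have hM : M ≠ 0 := (Mcs_pos hpos hatom hθ.le).ne'
  have hM1 : M - 1 ≠ 0 := sub_ne_zero.2 (Mcs_lt_one hpos hatom hθ).ne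
  have hI := integrable_one_div_one_sub_mul hpos hθ.le
  have key : ∫ x, (x - m) ^ 2 / (M * (1 - θ * x)) ∂η
      = ((m - 1 / θ) ^ 2 * M - (∫ x, x ∂η) / θ + (2 * m - 1 / θ) / θ) / M := by
    calc ∫ x, (x - m) ^ 2 / (M * (1 - θ * x)) ∂η
        = ∫ x, ((m - 1 / θ) ^ 2 * (1 / (1 - θ * x)) - x / θ + (2 * m - 1 / θ) / θ) / M ∂η := by
          refine integral_congr_ae ?_
          filter_upwards [ae_nonneg_of_measure_Iio hpos] with x hx
          have : 1 - x * θ ≠ 0 := by linarith [one_le_one_sub_mul hθ.le hx]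
          field_simp
          ring
      _ = _ := by
          rw [integral_div, integral_add ?_ (integrable_const _),
            integral_sub (hI.const_mul _) (hint.div_const _), integral_const_mul, integral_div,
            integral_const]
          · simp [M, Mcs]
          · exact (hI.const_mul _).sub (hint.div_const _)
  rw [varFunMinus, QcskMinus, hψ, integral_tilt hpos hθ.le, key, pseudoVarMinus_kcs hψ, hm_def,
    kcs, ← hM_def]
  field_simp
  ring

end CSKFamily

section Mean

variable {η : Measure ℝ} [IsProbabilityMeasure η]

lemma tendsto_Mcs_nhdsLT_zero (hpos : η (Iio 0) = 0) :
    Tendsto (Mcs η) (𝓝[<] 0) (𝓝 1) := by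
  have h := tendsto_integral_filter_of_dominated_convergence (μ := η) (l := 𝓝[<] (0 : ℝ))
    (F := fun θ x => 1 / (1 - θ * x)) (f := fun _ => 1) (fun _ => 1)
    (Eventually.of_forall fun θ => Measurable.aestronglyMeasurable (by fun_prop))
    (eventually_nhdsWithin_of_forall fun θ hθ => by
      filter_upwards [ae_nonneg_of_measure_Iio hpos] with x hx
      have h := one_div_one_sub_mul_mem_Ioc (le_of_lt hθ) hx
      rw [Real.norm_eq_abs, abs_of_pos h.1]
      exact h.2)
    (integrable_const 1)
    (ae_of_all _ fun x => by
      have : ContinuousAt (fun θ : ℝ => 1 / (1 - θ * x)) 0 := by fun_prop (disch := simp)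
      simpa using this.tendsto.mono_left nhdsWithin_le_nhds)
  rwa [integral_const, probReal_univ, one_smul] at h

lemma integral_div_one_sub_mul (hpos : η (Iio 0) = 0) (hatom : η {0} < 1) {θ : ℝ}
    (hθ : θ < 0) : ∫ x, x / (1 - θ * x) ∂η = Mcs η θ * kcs η θ := by
  have hI := integrable_one_div_one_sub_mul hpos hθ.le
  have hM := (Mcs_pos hpos hatom hθ.le).ne'
  rw [integral_congr_ae (div_one_sub_mul_ae_eq hpos hθ), integral_div,
    integral_sub hI (integrable_const 1), show ∫ x, 1 / (1 - θ * x) ∂η = Mcs η θ from rfl, kcs]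
  simp only [integral_const, probReal_univ, smul_eq_mul, one_mul]
  field_simp

lemma lintegral_ofReal_eq_of_tendsto_kcs (hpos : η (Iio 0) = 0) (hatom : η {0} < 1) {L : ℝ}
    (hL : Tendsto (kcs η) (𝓝[<] 0) (𝓝 L)) : ∫⁻ x, ENNReal.ofReal x ∂η = ENNReal.ofReal L := by
  obtain ⟨u, hu_mono, hu_neg, hu_lim⟩ := exists_seq_strictMono_tendsto (0 : ℝ)
  have hu : Tendsto u atTop (𝓝[<] 0) :=
    tendsto_nhdsWithin_iff.2 ⟨hu_lim, Eventually.of_forall hu_neg⟩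
  have hconv : Tendsto (fun n => ∫⁻ x, ENNReal.ofReal (x / (1 - u n * x)) ∂η) atTop
      (𝓝 (∫⁻ x, ENNReal.ofReal x ∂η)) := by
    refine lintegral_tendsto_of_tendsto_of_monotone (fun n => Measurable.aemeasurable
      (by fun_prop)) ?_ (ae_of_all _ fun x => ENNReal.tendsto_ofReal ?_)
    · filter_upwards [ae_nonneg_of_measure_Iio hpos] with x hx n k hnk
      have := one_le_one_sub_mul (hu_neg k).le hx
      have := hu_mono.monotone hnk
      exact ENNReal.ofReal_le_ofReal (div_le_div_of_nonneg_left hx (by linarith) (by nlinarith))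
    · have : Tendsto (fun n => 1 - u n * x) atTop (𝓝 1) := by
        simpa using (hu_lim.mul_const x).const_sub 1
      simpa [div_eq_mul_inv] using (this.inv₀ one_ne_zero).const_mul x
  have hval (n : ℕ) : ∫⁻ x, ENNReal.ofReal (x / (1 - u n * x)) ∂η
      = ENNReal.ofReal (Mcs η (u n) * kcs η (u n)) := by
    have hI := ((integrable_one_div_one_sub_mul hpos (hu_neg n).le).sub
      (integrable_const 1)).div_const (u n)
    rw [← integral_div_one_sub_mul hpos hatom (hu_neg n), ofReal_integral_eq_lintegral_ofReal
      (hI.congr (div_one_sub_mul_ae_eq hpos (hu_neg n)).symm)]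
    filter_upwards [ae_nonneg_of_measure_Iio hpos] with x hx
    have := one_le_one_sub_mul (hu_neg n).le hx
    exact div_nonneg hx (by linarith)
  refine tendsto_nhds_unique hconv ?_
  simp_rw [hval]
  simpa using ENNReal.tendsto_ofReal (((tendsto_Mcs_nhdsLT_zero hpos).comp hu).mul (hL.comp hu))

lemma integrable_id_of_tendsto_kcs (hpos : η (Iio 0) = 0) (hatom : η {0} < 1) {L : ℝ}
    (hL : Tendsto (kcs η) (𝓝[<] 0) (𝓝 L)) : Integrable (fun x => x) η := by
  refine ⟨aestronglyMeasurable_id, (hasFiniteIntegral_iff_ofReal ?_).2 ?_⟩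
  · exact ae_nonneg_of_measure_Iio hpos
  · rw [lintegral_ofReal_eq_of_tendsto_kcs hpos hatom hL]
    exact ofReal_lt_top

lemma integral_id_eq_of_tendsto_kcs (hpos : η (Iio 0) = 0) (hatom : η {0} < 1) {L : ℝ}
    (hL : Tendsto (kcs η) (𝓝[<] 0) (𝓝 L)) (hL0 : 0 ≤ L) : ∫ x, x ∂η = L := by
  rw [integral_eq_lintegral_of_nonneg_ae (ae_nonneg_of_measure_Iio hpos) aestronglyMeasurable_id,
    lintegral_ofReal_eq_of_tendsto_kcs hpos hatom hL, ENNReal.toReal_ofReal hL0]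

end Mean

section EtaGamma

variable {γ : ℝ} {η : Measure ℝ} [IsProbabilityMeasure η]

lemma kcs_eq_exp_of_Stransf_eq_exp (hpos : η (Iio 0) = 0) (hatom : η {0} < 1)
    (hS : ∀ z ∈ Ioo ((η {0}).toReal - 1) (0:ℝ), Stransf η z = Real.exp (-γ * z))
    {θ : ℝ} (hθ : θ < 0) : kcs η θ = Real.exp (γ * (Mcs η θ - 1)) := by
  rw [kcs_eq_inv_Stransf_PsiT hpos hatom hθ, hS _ (PsiT_mem_Ioo hpos hatom hθ),
    PsiT_eq_Mcs_sub_one hpos hθ.le, ← Real.exp_neg, neg_mul, neg_neg]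

lemma kcs_strictMonoOn_of_Stransf_eq_exp (hγ : 0 < γ) (hpos : η (Iio 0) = 0)
    (hatom : η {0} < 1)
    (hS : ∀ z ∈ Ioo ((η {0}).toReal - 1) (0:ℝ), Stransf η z = Real.exp (-γ * z)) :
    StrictMonoOn (kcs η) (Iio 0) := by
  intro a ha b hb hab
  have ha' : a ≤ 0 := le_of_lt ha
  have hb' : b ≤ 0 := le_of_lt hb
  rw [kcs_eq_exp_of_Stransf_eq_exp hpos hatom hS ha, kcs_eq_exp_of_Stransf_eq_exp hpos hatom hS hb,
    Real.exp_lt_exp]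
  gcongr
  exact Mcs_strictMonoOn hpos hatom ha' hb' hab

end EtaGamma

theorem eta_gamma_varFun_general (γ : ℝ) (hγ : 0 < γ)
    (η : Measure ℝ) [IsProbabilityMeasure η]
    (hpos : η (Iio 0) = 0) (hatom : η {0} < 1)
    (hS : ∀ z ∈ Ioo ((η {0}).toReal - 1) (0:ℝ), Stransf η z = Real.exp (-γ * z)) :
    (∫ x, x ∂η) = 1 ∧ meanDomMinus η ⊆ Ioo 0 1 ∧
    ∀ m ∈ meanDomMinus η,
      pseudoVarMinus η m = γ * m ^ 2 / Real.log m ∧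
      varFunMinus η m = γ * m * (m - 1) / Real.log m := by
  have hk {θ : ℝ} (hθ : θ < 0) := kcs_eq_exp_of_Stransf_eq_exp hpos hatom hS hθ
  have hlim : Tendsto (kcs η) (𝓝[<] 0) (𝓝 1) := by
    have h := (((tendsto_Mcs_nhdsLT_zero hpos).sub_const 1).const_mul γ).rexp
    rw [sub_self, mul_zero, Real.exp_zero] at h
    exact h.congr' (eventually_nhdsWithin_of_forall fun θ hθ => (hk hθ).symm)
  have hmean : ∫ x, x ∂η = 1 := integral_id_eq_of_tendsto_kcs hpos hatom hlim zero_le_one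
  refine ⟨hmean, ?_, ?_⟩
  · rintro _ ⟨θ, hθ, rfl⟩
    rw [hk hθ]
    exact ⟨Real.exp_pos _, Real.exp_lt_one_iff.2 <|
      mul_neg_of_pos_of_neg hγ (sub_neg.2 (Mcs_lt_one hpos hatom hθ))⟩
  · rintro _ ⟨θ, hθ, rfl⟩
    have hψ : ψminus η (kcs η θ) = θ :=
      (kcs_strictMonoOn_of_Stransf_eq_exp hγ hpos hatom hS).injOn.leftInvOn_invFunOn hθ
    have hlog : Real.log (kcs η θ) = γ * (Mcs η θ - 1) := by rw [hk hθ, Real.log_exp]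
    have hpv : pseudoVarMinus η (kcs η θ) = γ * kcs η θ ^ 2 / Real.log (kcs η θ) := by
      rw [pseudoVarMinus_kcs hψ, hlog, mul_div_mul_left _ _ hγ.ne']
    refine ⟨hpv, ?_⟩
    have hm : kcs η θ ≠ 0 := by rw [hk hθ]; exact (Real.exp_pos _).ne'
    rw [varFunMinus_kcs hpos hatom (integrable_id_of_tendsto_kcs hpos hatom hlim) hθ hψ, hmean,
      hpv]
    field_simp

/-- the measure `η_γ` with `S_{η_γ}(z) = exp(-γz)` has mean 1,
pseudo-variance function `γm²/ln m` and variance function `γm(m-1)/ln m`,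
on a domain of means contained in `(0,1)`. -/
theorem eta_gamma_varFun (γ : ℝ) (hγ : 0 < γ)
    (η : Measure ℝ) [IsProbabilityMeasure η]
    (hnd : Nondeg η) (hpos : η (Iio 0) = 0) (hatom : η {0} < 1)
    (hS : ∀ z ∈ Ioo ((η {0}).toReal - 1) (0:ℝ), Stransf η z = Real.exp (-γ * z)) :
    (∫ x, x ∂η) = 1 ∧ meanDomMinus η ⊆ Ioo 0 1 ∧
    ∀ m ∈ meanDomMinus η,
      pseudoVarMinus η m = γ * m ^ 2 / Real.log m ∧
      varFunMinus η m = γ * m * (m - 1) / Real.log m :=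
  eta_gamma_varFun_general γ hγ η hpos hatom hS
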